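/- Let m ≥ 2 and let F be an algebraically closed field containing a nontrivial m-th root of unity ε₀ (i.e. m is not a power of char F). For a, b ∈ F*, define the 2m×2m block matrix Z_{a,b} = [[aJ, E],[0, bJ]] where J = J_{0,m}. If S_m(a,b) := Σ_{i+j=m-1} a^i b^j ≠ 0 and a, b ≠ 0, then Z_{a,b} is nilpotent with exactly two Jordan blocks, of sizes m+1 and m−1; if S_m(a,b) = 0 and a, b ≠ 0, then Z_{a,b} is nilpotent with two Jordan blocks each of size m. -/

import Mathlib

def jordanBlock (F : Type*) [Field F] (m : ℕ) : Matrix (Fin m) (Fin m) F :=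
  Matrix.of fun i j => if (j : ℕ) = (i : ℕ) + 1 then 1 else 0

/-!
`Z_{a,b}` is conjugated to its Jordan form `N` by an explicit matrix `G = [[A, B], [C, D]]` with
`A`, `D` diagonal, `B` subdiagonal and `C` superdiagonal, whose entries are monomials in `a`, `b`
times the sums `S_k = geomSum₂ a b k`. Blockwise, `Z G = G N` reduces to the recursions
`S_{k+1} = a^k + b S_k = b^k + a S_k`. The Schur complement `A - B D⁻¹ C` is diagonal with
entries `S_m` and `a^(m-1-i) S_m / b` (by `S_m = b^(m-i) S_i + a^i S_(m-i)`), so `G` is invertible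
when `S_m ≠ 0`. When `S_m = 0` the corner term of the `(1, 2)` block vanishes, and the block
triangular `G₀ = [[diag(a^(m-1-i)), B], [0, D]]` conjugates `Z` to `J_m ⊕ J_m`.
-/

open Matrix Finset

section GeomSum

variable {R : Type*} [CommRing R] (a b : R)

def geomSum₂ (n : ℕ) : R := ∑ i ∈ range n, a ^ i * b ^ (n - 1 - i)

@[simp] lemma geomSum₂_zero : geomSum₂ a b 0 = 0 := by simp [geomSum₂]

@[simp] lemma geomSum₂_one : geomSum₂ a b 1 = 1 := by simp [geomSum₂]

lemma geomSum₂_comm (n : ℕ) : geomSum₂ a b n = geomSum₂ b a n := geom_sum₂_comm a b n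

lemma geomSum₂_succ' (n : ℕ) : geomSum₂ a b (n + 1) = a ^ n + b * geomSum₂ a b n := by
  simpa only [geomSum₂, Nat.add_sub_cancel] using geom_sum₂_succ_eq a b

lemma geomSum₂_succ (n : ℕ) : geomSum₂ a b (n + 1) = b ^ n + a * geomSum₂ a b n := by
  rw [geomSum₂_comm, geomSum₂_succ', geomSum₂_comm]

lemma geomSum₂_add (i k : ℕ) :
    geomSum₂ a b (i + k) = b ^ k * geomSum₂ a b i + a ^ i * geomSum₂ a b k := by
  induction k with
  | zero => simp
  | succ k ih => rw [← add_assoc, geomSum₂_succ', ih, geomSum₂_succ']; ring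

end GeomSum

lemma isNilpotent_and_exists_units_conj_of_mul_eq_mul {M : Type*} [MonoidWithZero M]
    {z n g : M} (hg : IsUnit g) (h : z * g = g * n) (hn : IsNilpotent n) :
    IsNilpotent z ∧ ∃ u : Mˣ, z = u * n * ↑u⁻¹ := by
  obtain ⟨u, rfl⟩ := hg
  have hz : z = u * n * ↑u⁻¹ := (Units.eq_mul_inv_iff_mul_eq u).mpr h
  obtain ⟨k, hk⟩ := hn
  exact ⟨⟨k, by rw [hz, Units.conj_pow, hk, mul_zero, zero_mul]⟩, u, hz⟩

section FinSum

variable {R : Type*} [AddCommMonoid R] {m : ℕ}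

lemma sum_ite_val_eq (f : Fin m → R) (n : ℕ) :
    (∑ k : Fin m, if (k : ℕ) = n then f k else 0) = if h : n < m then f ⟨n, h⟩ else 0 := by
  split_ifs with h
  · rw [Finset.sum_eq_single (⟨n, h⟩ : Fin m)]
    · simp
    · intro k _ hk
      rw [if_neg fun e => hk (Fin.ext e)]
    · simp
  · exact Finset.sum_eq_zero fun k _ => if_neg fun (e : (k : ℕ) = n) => h (e ▸ k.isLt)

lemma sum_ite_val_eq_add_one (f : Fin m → R) (j : Fin m) :
    (∑ k : Fin m, if (j : ℕ) = k + 1 then f k else 0) =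
      if 0 < (j : ℕ) then f ⟨j - 1, by omega⟩ else 0 := by
  simp_rw [show ∀ k : Fin m, ((j : ℕ) = k + 1) = ((k : ℕ) = j - 1 ∧ 0 < (j : ℕ)) from
    fun k => propext (by omega), ite_and]
  rw [sum_ite_val_eq]
  split_ifs <;> first | rfl | omega

end FinSum

section Matrices

variable {F : Type*} [Field F] {m : ℕ}

def superdiag (c : Fin m → F) : Matrix (Fin m) (Fin m) F :=
  of fun i j => if (j : ℕ) = i + 1 then c i else 0

def subdiag (c : Fin m → F) : Matrix (Fin m) (Fin m) F :=
  of fun i j => if (i : ℕ) = j + 1 then c j else 0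

variable (F m) in
def cornerSingle (c : F) : Matrix (Fin m) (Fin m) F :=
  of fun i j => if (i : ℕ) = 0 ∧ (j : ℕ) = 0 then c else 0

variable (F m) in
/-- The nilpotent Jordan form `J₁ ⊕ J_{m-1}`: the Jordan block with its first `1` removed. -/
def jordanBlockSplit : Matrix (Fin m) (Fin m) F :=
  superdiag fun i => if (i : ℕ) = 0 then 0 else 1

lemma cornerSingle_zero : cornerSingle F m 0 = 0 := by
  ext
  simp [cornerSingle]

lemma jordanBlock_eq_superdiag : jordanBlock F m = superdiag fun _ => 1 := rfl

lemma superdiag_mul_apply (c : Fin m → F) (M : Matrix (Fin m) (Fin m) F) (i j : Fin m) :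
    (superdiag c * M) i j = if h : (i : ℕ) + 1 < m then c i * M ⟨i + 1, h⟩ j else 0 := by
  simp only [mul_apply, superdiag, of_apply, ite_mul, zero_mul]
  exact sum_ite_val_eq (fun k => c i * M k j) _

lemma mul_superdiag_apply (M : Matrix (Fin m) (Fin m) F) (c : Fin m → F) (i j : Fin m) :
    (M * superdiag c) i j =
      if 0 < (j : ℕ) then M i ⟨j - 1, by omega⟩ * c ⟨j - 1, by omega⟩ else 0 := by
  simp only [mul_apply, superdiag, of_apply, mul_ite, mul_zero]
  exact sum_ite_val_eq_add_one (fun k => M i k * c k) j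

lemma subdiag_mul_apply (c : Fin m → F) (M : Matrix (Fin m) (Fin m) F) (i j : Fin m) :
    (subdiag c * M) i j =
      if 0 < (i : ℕ) then c ⟨i - 1, by omega⟩ * M ⟨i - 1, by omega⟩ j else 0 := by
  simp only [mul_apply, subdiag, of_apply, ite_mul, zero_mul]
  exact sum_ite_val_eq_add_one (fun k => c k * M k j) i

lemma subdiag_mul_diagonal (c d : Fin m → F) :
    subdiag c * diagonal d = subdiag fun j => c j * d j := by
  ext i j
  simp only [mul_diagonal, subdiag, of_apply, ite_mul, zero_mul]

lemma superdiag_mul_cornerSingle (c : Fin m → F) (x : F) :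
    superdiag c * cornerSingle F m x = 0 := by
  ext i j
  refine (mul_apply ..).trans (Finset.sum_eq_zero fun k _ => ?_)
  simp only [superdiag, cornerSingle, of_apply]
  split_ifs <;> first | omega | simp

lemma jordanBlock_pow_apply (k : ℕ) (i j : Fin m) :
    (jordanBlock F m ^ k) i j = if (j : ℕ) = i + k then 1 else 0 := by
  induction k generalizing i j with
  | zero => simp [one_apply, Fin.ext_iff, eq_comm]
  | succ k ih =>
    rw [pow_succ, jordanBlock_eq_superdiag, mul_superdiag_apply, ← jordanBlock_eq_superdiag, ih]
    dsimp only
    split_ifs <;> first | omega | simp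

lemma jordanBlock_pow_eq_zero {k : ℕ} (hk : m ≤ k) : jordanBlock F m ^ k = 0 := by
  ext i j
  rw [jordanBlock_pow_apply, if_neg (by omega), Matrix.zero_apply]

lemma isNilpotent_fromBlocks_jordanBlock (p q : ℕ) :
    IsNilpotent (fromBlocks (jordanBlock F p) 0 0 (jordanBlock F q)) := by
  refine ⟨p + q, ?_⟩
  have hpow (k : ℕ) : fromBlocks (jordanBlock F p) 0 0 (jordanBlock F q) ^ k =
      fromBlocks (jordanBlock F p ^ k) 0 0 (jordanBlock F q ^ k) := by
    induction k with
    | zero => simp [fromBlocks_one]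
    | succ k ih => simp [pow_succ, ih, fromBlocks_multiply]
  rw [hpow, jordanBlock_pow_eq_zero (by omega), jordanBlock_pow_eq_zero (by omega),
    fromBlocks_zero]

lemma smul_jordanBlock_mul_diagonal_pow (c : F) :
    c • (jordanBlock F m * diagonal fun i : Fin m => c ^ (m - 1 - (i : ℕ))) =
      (diagonal fun i : Fin m => c ^ (m - 1 - (i : ℕ))) * jordanBlock F m := by
  ext i j
  rw [jordanBlock_eq_superdiag, Matrix.smul_apply, superdiag_mul_apply, mul_superdiag_apply]
  simp only [diagonal_apply, Fin.ext_iff, one_mul, mul_one, smul_eq_mul]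
  split_ifs <;> first | (exfalso; omega) | simp | skip
  rw [← pow_succ']
  congr 1
  omega

variable (a b : F)

def chainDiag : Fin m → F :=
  fun i => if (i : ℕ) = 0 then geomSum₂ a b m
    else (a * b) ^ (m - 1 - (i : ℕ)) * geomSum₂ a b i

def chainSub : Matrix (Fin m) (Fin m) F := subdiag fun j => geomSum₂ a b (m - 1 - (j : ℕ))

def chainSuper : Matrix (Fin m) (Fin m) F :=
  superdiag fun i => -(a ^ (m - 1) * b ^ (m - 2 - (i : ℕ)))

variable (m) in
/-- The columns form Jordan chains of `Z_{a,b}` of lengths `m + 1` and `m - 1`, laid out as in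
`jordanChainIndexEquiv`; `chainMatrix₀` does the same with two chains of length `m` when
`S_m(a, b) = 0`. -/
def chainMatrix : Matrix (Fin m ⊕ Fin m) (Fin m ⊕ Fin m) F :=
  fromBlocks (diagonal (chainDiag a b)) (chainSub a b) (chainSuper a b)
    (diagonal fun i : Fin m => b ^ (m - 1 - (i : ℕ)))

variable (m) in
def chainMatrix₀ : Matrix (Fin m ⊕ Fin m) (Fin m ⊕ Fin m) F :=
  fromBlocks (diagonal fun i : Fin m => a ^ (m - 1 - (i : ℕ))) (chainSub a b) 0
    (diagonal fun i : Fin m => b ^ (m - 1 - (i : ℕ)))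

lemma diagonal_chainDiag_mul_cornerSingle :
    diagonal (chainDiag a b) * cornerSingle F m 1 = cornerSingle F m (geomSum₂ a b m) := by
  ext i j
  simp only [diagonal_mul, cornerSingle, of_apply, chainDiag, mul_ite, mul_one, mul_zero]
  split_ifs <;> simp_all

lemma smul_jordanBlock_mul_chainDiag_add_chainSuper (hm : 2 ≤ m) :
    a • (jordanBlock F m * diagonal (chainDiag a b)) + chainSuper a b =
      diagonal (chainDiag a b) * jordanBlockSplit F m := by
  ext i j
  rw [jordanBlock_eq_superdiag, Matrix.add_apply, Matrix.smul_apply, superdiag_mul_apply,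
    diagonal_mul]
  simp only [chainSuper, jordanBlockSplit, superdiag, of_apply, diagonal_apply, Fin.ext_iff,
    one_mul, chainDiag, smul_eq_mul, mul_ite, mul_zero, mul_one]
  split_ifs <;> first | (exfalso; omega) | simp | skip
  · rename_i hi
    rw [hi, zero_add, geomSum₂_one, mul_one, Nat.sub_zero, show m - 1 - 1 = m - 2 by omega,
      show m - 1 = m - 2 + 1 by omega]
    ring
  · rw [show m - 1 - ((i : ℕ) + 1) = m - 2 - i by omega,
      show m - 1 - (i : ℕ) = (m - 2 - i) + 1 by omega,
      show m - 1 = (m - 2 - i) + (i + 1) by omega, geomSum₂_succ', pow_add]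
    ring

lemma smul_jordanBlock_mul_chainSub_add (hm : 2 ≤ m) :
    a • (jordanBlock F m * chainSub a b) + diagonal (fun i : Fin m => b ^ (m - 1 - (i : ℕ))) =
      cornerSingle F m (geomSum₂ a b m) + chainSub a b * jordanBlock F m := by
  ext i j
  rw [jordanBlock_eq_superdiag, Matrix.add_apply, Matrix.add_apply, Matrix.smul_apply,
    superdiag_mul_apply, mul_superdiag_apply]
  simp only [chainSub, subdiag, cornerSingle, of_apply, diagonal_apply, Fin.ext_iff, one_mul,
    mul_one, smul_eq_mul]
  split_ifs <;> first | (exfalso; omega) | simp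
  · rw [show (i : ℕ) = 0 by omega, show (j : ℕ) = 0 by omega, Nat.sub_zero, add_comm,
      ← geomSum₂_succ, Nat.sub_add_cancel (by omega)]
  · rw [show m - 1 - ((j : ℕ) - 1) = m - 1 - j + 1 by omega, geomSum₂_succ,
      show (i : ℕ) = j by omega, add_comm]
  · rw [show m - 1 - (i : ℕ) = 0 by omega, show m - 1 - ((j : ℕ) - 1) = 1 by omega]
    simp

lemma smul_jordanBlock_mul_chainSuper (hm : 2 ≤ m) :
    b • (jordanBlock F m * chainSuper a b) = chainSuper a b * jordanBlockSplit F m := by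
  ext i j
  rw [jordanBlock_eq_superdiag, Matrix.smul_apply, superdiag_mul_apply, jordanBlockSplit,
    mul_superdiag_apply]
  simp only [chainSuper, superdiag, of_apply, one_mul, smul_eq_mul]
  split_ifs <;> first | (exfalso; omega) | simp
  rw [show m - 2 - (i : ℕ) = (m - 2 - ((i : ℕ) + 1)) + 1 by omega, pow_succ]
  ring

lemma fromBlocks_mul_chainMatrix (hm : 2 ≤ m) :
    fromBlocks (a • jordanBlock F m) 1 0 (b • jordanBlock F m) * chainMatrix m a b =
      chainMatrix m a b *
        fromBlocks (jordanBlockSplit F m) (cornerSingle F m 1) 0 (jordanBlock F m) := by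
  simp only [chainMatrix, fromBlocks_multiply, smul_mul, Matrix.one_mul, Matrix.zero_mul,
    Matrix.mul_zero, add_zero, zero_add]
  rw [smul_jordanBlock_mul_chainDiag_add_chainSuper a b hm,
    smul_jordanBlock_mul_chainSub_add a b hm, smul_jordanBlock_mul_chainSuper a b hm,
    diagonal_chainDiag_mul_cornerSingle, chainSuper, superdiag_mul_cornerSingle, zero_add,
    smul_jordanBlock_mul_diagonal_pow]

lemma fromBlocks_mul_chainMatrix₀ (hm : 2 ≤ m) (hS : geomSum₂ a b m = 0) :
    fromBlocks (a • jordanBlock F m) 1 0 (b • jordanBlock F m) * chainMatrix₀ m a b =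
      chainMatrix₀ m a b * fromBlocks (jordanBlock F m) 0 0 (jordanBlock F m) := by
  have hB := smul_jordanBlock_mul_chainSub_add a b hm
  rw [hS, cornerSingle_zero, zero_add] at hB
  simp only [chainMatrix₀, fromBlocks_multiply, smul_mul, Matrix.one_mul, Matrix.zero_mul,
    Matrix.mul_zero, add_zero, zero_add]
  rw [smul_jordanBlock_mul_diagonal_pow, smul_jordanBlock_mul_diagonal_pow, hB]

lemma chainDiag_sub_chainSub_mul_chainSuper (hm : 2 ≤ m) (hb : b ≠ 0) :
    diagonal (chainDiag a b) -
        chainSub a b * diagonal (fun i : Fin m => (b ^ (m - 1 - (i : ℕ)))⁻¹) * chainSuper a b =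
      diagonal fun i : Fin m =>
        if (i : ℕ) = 0 then geomSum₂ a b m
        else a ^ (m - 1 - (i : ℕ)) * geomSum₂ a b m * b⁻¹ := by
  rw [chainSub, subdiag_mul_diagonal]
  ext i j
  rw [Matrix.sub_apply, subdiag_mul_apply]
  simp only [chainSuper, superdiag, of_apply, diagonal_apply, Fin.ext_iff, chainDiag, mul_ite,
    mul_zero, mul_neg]
  split_ifs <;> first | (exfalso; omega) | simp
  obtain ⟨s, hs⟩ : ∃ s, m - 1 - (i : ℕ) = s := ⟨_, rfl⟩
  have hSm := geomSum₂_add a b i (s + 1)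
  rw [show (i : ℕ) + (s + 1) = m by omega] at hSm
  rw [hs, show m - 1 - ((i : ℕ) - 1) = s + 1 by omega, show m - 2 - ((i : ℕ) - 1) = s by omega,
    show m - 1 = s + i by omega, hSm]
  field_simp
  ring

lemma isUnit_chainMatrix (hm : 2 ≤ m) (ha : a ≠ 0) (hb : b ≠ 0)
    (hS : geomSum₂ a b m ≠ 0) :
    IsUnit (chainMatrix m a b) := by
  have hD : (diagonal fun i : Fin m => b ^ (m - 1 - (i : ℕ))) *
      diagonal (fun i : Fin m => (b ^ (m - 1 - (i : ℕ)))⁻¹) = 1 := by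
    rw [diagonal_mul_diagonal, ← diagonal_one]
    exact congrArg diagonal (funext fun i => mul_inv_cancel₀ (pow_ne_zero _ hb))
  let := invertibleOfRightInverse _ _ hD
  rw [isUnit_iff_isUnit_det, chainMatrix, det_fromBlocks₂₂, invOf_eq_right_inv hD,
    chainDiag_sub_chainSub_mul_chainSuper a b hm hb, det_diagonal, det_diagonal, isUnit_iff_ne_zero]
  refine mul_ne_zero (prod_ne_zero_iff.mpr fun _ _ => pow_ne_zero _ hb)
    (prod_ne_zero_iff.mpr fun i _ => ?_)
  split_ifs
  exacts [hS, mul_ne_zero (mul_ne_zero (pow_ne_zero _ ha) hS) (inv_ne_zero hb)]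

lemma isUnit_chainMatrix₀ (ha : a ≠ 0) (hb : b ≠ 0) : IsUnit (chainMatrix₀ m a b) := by
  rw [isUnit_iff_isUnit_det, chainMatrix₀, det_fromBlocks_zero₂₁, det_diagonal, det_diagonal,
    isUnit_iff_ne_zero]
  exact mul_ne_zero (prod_ne_zero_iff.mpr fun _ _ => pow_ne_zero _ ha)
    (prod_ne_zero_iff.mpr fun _ _ => pow_ne_zero _ hb)

variable (m) in
/-- `J_{m+1}` is placed on `inl 0` followed by the second block, `J_{m-1}` on the rest of the
first block. -/
def jordanChainIndexEquiv (hm : 2 ≤ m) : Fin (m + 1) ⊕ Fin (m - 1) ≃ Fin m ⊕ Fin m where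
  toFun
    | .inl i => if h : (i : ℕ) = 0 then .inl ⟨0, by omega⟩ else .inr ⟨i - 1, by omega⟩
    | .inr j => .inl ⟨j + 1, by omega⟩
  invFun
    | .inl i => if h : (i : ℕ) = 0 then .inl ⟨0, by omega⟩ else .inr ⟨i - 1, by omega⟩
    | .inr j => .inl ⟨j + 1, by omega⟩
  left_inv := by rintro (⟨_ | i, _⟩ | j) <;> simp
  right_inv := by rintro (⟨_ | i, _⟩ | j) <;> simp

lemma reindex_fromBlocks_jordanBlock (hm : 2 ≤ m) :
    reindex (jordanChainIndexEquiv m hm) (jordanChainIndexEquiv m hm)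
        (fromBlocks (jordanBlock F (m + 1)) 0 0 (jordanBlock F (m - 1))) =
      fromBlocks (jordanBlockSplit F m) (cornerSingle F m 1) 0 (jordanBlock F m) := by
  ext (⟨_ | i, _⟩ | i) (⟨_ | j, _⟩ | j) <;>
    simp [jordanChainIndexEquiv, jordanBlock, jordanBlockSplit, superdiag, cornerSingle]

end Matrices

theorem stmt17_general (F : Type*) [Field F] (m : ℕ) (hm : 2 ≤ m)
    (a b : F) (ha : a ≠ 0) (hb : b ≠ 0)
    (Z : Matrix (Fin m ⊕ Fin m) (Fin m ⊕ Fin m) F)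
    (hZ : Z = Matrix.fromBlocks (a • jordanBlock F m) 1 0 (b • jordanBlock F m)) :
    ((∑ i ∈ Finset.range m, a ^ i * b ^ (m - 1 - i)) ≠ 0 →
      IsNilpotent Z ∧
      ∃ (e : (Fin (m + 1) ⊕ Fin (m - 1)) ≃ (Fin m ⊕ Fin m))
        (g : (Matrix (Fin m ⊕ Fin m) (Fin m ⊕ Fin m) F)ˣ),
        Z = (g : Matrix (Fin m ⊕ Fin m) (Fin m ⊕ Fin m) F) *
          (Matrix.reindex e e
            (Matrix.fromBlocks (jordanBlock F (m + 1)) 0 0 (jordanBlock F (m - 1)))) *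
          ((g⁻¹ : (Matrix (Fin m ⊕ Fin m) (Fin m ⊕ Fin m) F)ˣ) :
            Matrix (Fin m ⊕ Fin m) (Fin m ⊕ Fin m) F)) ∧
    ((∑ i ∈ Finset.range m, a ^ i * b ^ (m - 1 - i)) = 0 →
      IsNilpotent Z ∧
      ∃ g : (Matrix (Fin m ⊕ Fin m) (Fin m ⊕ Fin m) F)ˣ,
        Z = (g : Matrix (Fin m ⊕ Fin m) (Fin m ⊕ Fin m) F) *
          (Matrix.fromBlocks (jordanBlock F m) 0 0 (jordanBlock F m)) *
          ((g⁻¹ : (Matrix (Fin m ⊕ Fin m) (Fin m ⊕ Fin m) F)ˣ) :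
            Matrix (Fin m ⊕ Fin m) (Fin m ⊕ Fin m) F)) := by
  subst hZ
  refine ⟨fun hS => ?_, fun hS => ?_⟩
  · have h := fromBlocks_mul_chainMatrix a b hm
    rw [← reindex_fromBlocks_jordanBlock hm] at h
    obtain ⟨hnil, g, hg⟩ := isNilpotent_and_exists_units_conj_of_mul_eq_mul
      (isUnit_chainMatrix a b hm ha hb hS) h
      ((isNilpotent_fromBlocks_jordanBlock _ _).map (reindexAlgEquiv F F _))
    exact ⟨hnil, _, g, hg⟩
  · exact isNilpotent_and_exists_units_conj_of_mul_eq_mul (isUnit_chainMatrix₀ a b ha hb)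
      (fromBlocks_mul_chainMatrix₀ a b hm hS) (isNilpotent_fromBlocks_jordanBlock m m)

/-- For `a, b ≠ 0`, the block matrix `Z_{a,b} = [[aJ, E], [0, bJ]]` (with `J = J_{0,m}`,
`m ≥ 2`, over an algebraically closed field containing a nontrivial `m`-th root of
unity `ε₀`) is nilpotent with exactly two Jordan blocks: of sizes `m+1` and `m-1` if
`S_m(a,b) = Σ_{i+j=m-1} a^i b^j ≠ 0`, and both of size `m` if `S_m(a,b) = 0`. -/
theorem stmt17 (F : Type*) [Field F] [IsAlgClosed F] (m : ℕ) (hm : 2 ≤ m)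
    (ε₀ : F) (hε : ε₀ ^ m = 1) (hε1 : ε₀ ≠ 1)
    (a b : F) (ha : a ≠ 0) (hb : b ≠ 0)
    (Z : Matrix (Fin m ⊕ Fin m) (Fin m ⊕ Fin m) F)
    (hZ : Z = Matrix.fromBlocks (a • jordanBlock F m) 1 0 (b • jordanBlock F m)) :
    ((∑ i ∈ Finset.range m, a ^ i * b ^ (m - 1 - i)) ≠ 0 →
      IsNilpotent Z ∧
      ∃ (e : (Fin (m + 1) ⊕ Fin (m - 1)) ≃ (Fin m ⊕ Fin m))
        (g : (Matrix (Fin m ⊕ Fin m) (Fin m ⊕ Fin m) F)ˣ),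
        Z = (g : Matrix (Fin m ⊕ Fin m) (Fin m ⊕ Fin m) F) *
          (Matrix.reindex e e
            (Matrix.fromBlocks (jordanBlock F (m + 1)) 0 0 (jordanBlock F (m - 1)))) *
          ((g⁻¹ : (Matrix (Fin m ⊕ Fin m) (Fin m ⊕ Fin m) F)ˣ) :
            Matrix (Fin m ⊕ Fin m) (Fin m ⊕ Fin m) F)) ∧
    ((∑ i ∈ Finset.range m, a ^ i * b ^ (m - 1 - i)) = 0 →
      IsNilpotent Z ∧
      ∃ g : (Matrix (Fin m ⊕ Fin m) (Fin m ⊕ Fin m) F)ˣ,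
        Z = (g : Matrix (Fin m ⊕ Fin m) (Fin m ⊕ Fin m) F) *
          (Matrix.fromBlocks (jordanBlock F m) 0 0 (jordanBlock F m)) *
          ((g⁻¹ : (Matrix (Fin m ⊕ Fin m) (Fin m ⊕ Fin m) F)ˣ) :
            Matrix (Fin m ⊕ Fin m) (Fin m ⊕ Fin m) F)) :=
  stmt17_general F m hm a b ha hb Z hZ
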